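/- Suppose for all t ∈ [0,T): (Y^∞_t − Y_t)(X^∞_t − X_t) = ∫₀ᵗ [ −Q_s (X^∞_s − X_s)² − B_s² R_s^{−1} (Y^∞_s − Y_s)² ] ds, where Q_s ≥ q > 0 and B_s² R_s^{−1} ≥ b > 0, the left-hand side tends to 0 as t → T, and all functions are continuous. Then X^∞ = X and Y^∞ = Y on [0,T). -/
import Mathlib


open MeasureTheory intervalIntegral

theorem uniqueness_from_product_identity (T q b : ℝ) (hT : 0 < T)
    (hq : 0 < q) (hb : 0 < b)
    (Xinf X Yinf Y Q β : ℝ → ℝ)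
    (hXinf : ContinuousOn Xinf (Set.Ico 0 T)) (hX : ContinuousOn X (Set.Ico 0 T))
    (hYinf : ContinuousOn Yinf (Set.Ico 0 T)) (hY : ContinuousOn Y (Set.Ico 0 T))
    (hQcont : Continuous Q) (hβcont : Continuous β)
    (hQ : ∀ s ∈ Set.Ico (0 : ℝ) T, q ≤ Q s)
    (hβ : ∀ s ∈ Set.Ico (0 : ℝ) T, b ≤ β s)
    (hident : ∀ t ∈ Set.Ico (0 : ℝ) T,
      (Yinf t - Y t) * (Xinf t - X t) =
        ∫ s in (0 : ℝ)..t,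
          (-(Q s) * (Xinf s - X s) ^ 2 - β s * (Yinf s - Y s) ^ 2))
    (hlim : Filter.Tendsto (fun t => (Yinf t - Y t) * (Xinf t - X t))
      (nhdsWithin T (Set.Iio T)) (nhds 0)) :
    ∀ t ∈ Set.Ico (0 : ℝ) T, Xinf t = X t ∧ Yinf t = Y t := by
  set f : ℝ → ℝ := fun s => -(Q s) * (Xinf s - X s) ^ 2 - β s * (Yinf s - Y s) ^ 2 with hf
  have hfc : ContinuousOn f (Set.Ico 0 T) := by
    apply ContinuousOn.sub
    · exact (hQcont.continuousOn.neg).mul ((hXinf.sub hX).pow 2)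
    · exact hβcont.continuousOn.mul ((hYinf.sub hY).pow 2)
  -- pointwise bound : f s ≤ 0 on Ico 0 T
  have hfle : ∀ s ∈ Set.Ico (0 : ℝ) T, f s ≤ 0 := by
    intro s hs
    have h1 : 0 ≤ Q s * (Xinf s - X s) ^ 2 :=
      mul_nonneg (le_trans hq.le (hQ s hs)) (sq_nonneg _)
    have h2 : 0 ≤ β s * (Yinf s - Y s) ^ 2 :=
      mul_nonneg (le_trans hb.le (hβ s hs)) (sq_nonneg _)
    simp only [hf]; nlinarith
  -- interval integrability on subintervals of [0, T)
  have hint : ∀ a c : ℝ, 0 ≤ a → c < T → a ≤ c → IntervalIntegrable f volume a c := by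
    intro a c ha hc hac
    apply ContinuousOn.intervalIntegrable
    apply hfc.mono
    rw [Set.uIcc_of_le hac]
    exact fun x hx => ⟨le_trans ha hx.1, lt_of_le_of_lt hx.2 hc⟩
  -- F t := ∫ 0..t f ; nonpositive
  have hFle : ∀ t ∈ Set.Ico (0 : ℝ) T, (∫ s in (0:ℝ)..t, f s) ≤ 0 := by
    intro t ht
    have := intervalIntegral.integral_nonneg (μ := volume) (f := fun s => -f s) ht.1
      (fun u hu => by
        have : f u ≤ 0 := hfle u ⟨hu.1, lt_of_le_of_lt hu.2 ht.2⟩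
        show (0:ℝ) ≤ -f u; linarith)
    rw [intervalIntegral.integral_neg] at this
    linarith
  -- F t ≥ 0 from the limit
  have hFge : ∀ t ∈ Set.Ico (0 : ℝ) T, 0 ≤ (∫ s in (0:ℝ)..t, f s) := by
    intro t ht
    refine le_of_tendsto hlim ?_
    filter_upwards [Ioo_mem_nhdsLT_of_mem (Set.mem_Ioc.2 ⟨ht.2, le_refl T⟩)] with t' ht'
    have ht'mem : t' ∈ Set.Ico (0 : ℝ) T := ⟨le_trans ht.1 ht'.1.le, ht'.2⟩
    rw [hident t' ht'mem]
    have hsplit : (∫ s in (0:ℝ)..t, f s) + (∫ s in t..t', f s) = ∫ s in (0:ℝ)..t', f s :=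
      intervalIntegral.integral_add_adjacent_intervals
        (hint 0 t le_rfl ht.2 ht.1) (hint t t' ht.1 ht'mem.2 ht'.1.le)
    have htail : (∫ s in t..t', f s) ≤ 0 := by
      have := intervalIntegral.integral_nonneg (μ := volume) (f := fun s => -f s) ht'.1.le
        (fun u hu => by
          have : f u ≤ 0 := hfle u ⟨le_trans ht.1 hu.1, lt_of_le_of_lt hu.2 ht'mem.2⟩
          show (0:ℝ) ≤ -f u; linarith)
      rw [intervalIntegral.integral_neg] at this
      linarith
    linarith
  have hFzero : ∀ t ∈ Set.Ico (0 : ℝ) T, (∫ s in (0:ℝ)..t, f s) = 0 :=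
    fun t ht => le_antisymm (hFle t ht) (hFge t ht)
  -- now show f t = 0 for all t in [0, T)
  have hfzero : ∀ t ∈ Set.Ico (0 : ℝ) T, f t = 0 := by
    intro t ht
    by_contra hne
    have hflt : f t < 0 := lt_of_le_of_ne (hfle t ht) hne
    -- find t' > t with f < 0 on [t, t']
    have hcont := (hfc t ht)
    have : ∀ᶠ s in nhdsWithin t (Set.Ico 0 T), f s < 0 :=
      hcont.eventually_lt continuousWithinAt_const hflt
    rw [eventually_nhdsWithin_iff] at this
    obtain ⟨ε, hε, hball⟩ := Metric.eventually_nhds_iff.1 this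
    set t' := min (t + ε / 2) ((t + T) / 2) with ht'def
    have htt' : t < t' := lt_min (by linarith) (by linarith [ht.2])
    have ht'T : t' < T := lt_of_le_of_lt (min_le_right _ _) (by linarith [ht.2])
    have hneg : ∀ x ∈ Set.Ioo t t', f x < 0 := by
      intro x hx
      apply hball
      · rw [Real.dist_eq, abs_of_nonneg (by linarith [hx.1])]
        have : x < t + ε / 2 := lt_of_lt_of_le hx.2 (min_le_left _ _)
        linarith
      · exact ⟨le_trans ht.1 hx.1.le, lt_trans hx.2 ht'T⟩
    have hpos : 0 < ∫ s in t..t', -f s := by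
      apply intervalIntegral_pos_of_pos_on
      · exact (hint t t' ht.1 ht'T htt'.le).neg
      · intro x hx; linarith [hneg x hx]
      · exact htt'
    rw [intervalIntegral.integral_neg] at hpos
    have hsplit : (∫ s in (0:ℝ)..t, f s) + (∫ s in t..t', f s) = ∫ s in (0:ℝ)..t', f s :=
      intervalIntegral.integral_add_adjacent_intervals
        (hint 0 t le_rfl ht.2 ht.1) (hint t t' ht.1 ht'T htt'.le)
    have h1 := hFzero t ht
    have h2 := hFzero t' ⟨le_trans ht.1 htt'.le, ht'T⟩
    linarith
  intro t ht
  have h := hfzero t ht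
  have h1 : 0 ≤ Q t * (Xinf t - X t) ^ 2 :=
    mul_nonneg (le_trans hq.le (hQ t ht)) (sq_nonneg _)
  have h2 : 0 ≤ β t * (Yinf t - Y t) ^ 2 :=
    mul_nonneg (le_trans hb.le (hβ t ht)) (sq_nonneg _)
  simp only [hf] at h
  have hQt : 0 < Q t := lt_of_lt_of_le hq (hQ t ht)
  have hβt : 0 < β t := lt_of_lt_of_le hb (hβ t ht)
  have hx : (Xinf t - X t) ^ 2 = 0 := by
    nlinarith [sq_nonneg (Xinf t - X t), sq_nonneg (Yinf t - Y t),
      mul_nonneg hQt.le (sq_nonneg (Xinf t - X t)),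
      mul_nonneg hβt.le (sq_nonneg (Yinf t - Y t))]
  have hy : (Yinf t - Y t) ^ 2 = 0 := by
    nlinarith [sq_nonneg (Xinf t - X t), sq_nonneg (Yinf t - Y t),
      mul_nonneg hQt.le (sq_nonneg (Xinf t - X t)),
      mul_nonneg hβt.le (sq_nonneg (Yinf t - Y t))]
  constructor
  · have := pow_eq_zero_iff (n := 2) (by norm_num) |>.1 hx
    linarith [sub_eq_zero.1 this]
  · have := pow_eq_zero_iff (n := 2) (by norm_num) |>.1 hy
    linarith [sub_eq_zero.1 this]
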